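/- Let ε > 0 and λ > 0 with √λ > ε, let z* be the unique root in (2√λ − ε, λ/ε) of r(w) = q_{λ,w}(r₂(w)) − q_{λ,w}(0), and let x^{(0)} ≥ √λ − ε. For z ≥ 0, let (x^{(k)})_{k≥0} be the sequence generated by the reweighted ℓ₁ iteration from x^{(0)}. Then: for every z ∈ [0, 2√λ − ε) ∪ (z*, ∞), the sequence converges and its limit belongs to prox_{λg}(z); and for every z ∈ [2√λ − ε, z*), the sequence converges to r₂(z), which does not belong to prox_{λg}(z) = {0}. -/

import Mathlib

/-!
On `(0, ∞)` the derivative of `q_{λ,z}` has the sign of `(t - z)(ε + t) + λ`. For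
`z < 2√λ - ε` this quadratic has no real root, so `q_{λ,z}` increases and `0` is the minimizer.
Otherwise its roots satisfy `r₁ ≤ √λ - ε ≤ r₂`, the only candidates are `0` and `r₂`, and `r`
decides between them; `r` is strictly decreasing (compare both objectives at `r₂` of the smaller
argument), so it changes sign exactly at `z*`.

On nonnegative iterates the iteration is `x ↦ max 0 (z - λ / (ε + x))`, a monotone map whose
positive fixed points are the roots of the same quadratic, so every orbit is monotone and
converges to a fixed point. For `z < 2√λ - ε` that is `0`. For `z ≥ 2√λ - ε` the map keeps
`[√λ - ε, ∞)` invariant and `r₂` is its only fixed point there, whether or not `r₂` minimizes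
`q_{λ,z}`.
-/

open Real Filter

/-- The scalar log-sum penalty `g(w) = log(1 + |w|/ε)`. -/
noncomputable def logpen (ε : ℝ) (w : ℝ) : ℝ := Real.log (1 + |w| / ε)

/-- The objective `q_{λ,z}(x) = (1/(2λ))(x − z)² + g(x)`. -/
noncomputable def qfun (lam ε z x : ℝ) : ℝ :=
  1 / (2 * lam) * (x - z) ^ 2 + logpen ε x

/-- The proximity operator of `λ g` at `z`: the set of global minimizers of `q_{λ,z}`. -/
def prox (lam ε z : ℝ) : Set ℝ := {x | ∀ y : ℝ, qfun lam ε z x ≤ qfun lam ε z y}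

/-- `r₁(z) = (z − ε)/2 − √((z + ε)²/4 − λ)`. -/
noncomputable def r1 (lam ε z : ℝ) : ℝ :=
  (z - ε) / 2 - Real.sqrt ((z + ε) ^ 2 / 4 - lam)

/-- `r₂(z) = (z − ε)/2 + √((z + ε)²/4 − λ)`. -/
noncomputable def r2 (lam ε z : ℝ) : ℝ :=
  (z - ε) / 2 + Real.sqrt ((z + ε) ^ 2 / 4 - lam)

/-- `r(z) = q_{λ,z}(r₂(z)) − q_{λ,z}(0)`. -/
noncomputable def rfun (lam ε z : ℝ) : ℝ :=
  qfun lam ε z (r2 lam ε z) - qfun lam ε z 0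

/-- The iteratively reweighted ℓ₁ iteration for `prox_{λ g}(z)`. -/
def IterRW (lam ε z : ℝ) (x : ℕ → ℝ) : Prop :=
  ∀ k : ℕ, x (k + 1) =
    if |z| ≤ lam / (ε + |x k|) then 0
    else Real.sign z * (|z| - lam / (ε + |x k|))

open Set Function Topology

section OrbitConvergence

variable {α : Type*} [ConditionallyCompleteLinearOrder α] [TopologicalSpace α] [OrderTopology α]
  {f : α → α} {s : Set α} {c : α} {x : ℕ → α}

theorem tendsto_of_mapsTo_of_le_map (hf : Continuous f) (hs : IsClosed s) (hbdd : BddAbove s)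
    (hmaps : MapsTo f s s) (hle : ∀ w ∈ s, w ≤ f w) (huniq : ∀ w ∈ s, f w = w → w = c)
    (hx : ∀ k, x (k + 1) = f (x k)) (hx0 : x 0 ∈ s) : Tendsto x atTop (𝓝 c) := by
  have hmem : ∀ k, x k ∈ s := by
    intro k
    induction k with
    | zero => exact hx0
    | succ k ih => rw [hx]; exact hmaps ih
  have hmono : Monotone x := monotone_nat_of_le_succ fun k => (hx k).symm ▸ hle _ (hmem k)
  have hlim := tendsto_atTop_ciSup hmono (hbdd.mono (range_subset_iff.2 hmem))
  have hfix : f (⨆ k, x k) = ⨆ k, x k := by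
    refine tendsto_nhds_unique ((hf.tendsto _).comp hlim) ?_
    simpa only [comp_def, ← hx] using (tendsto_add_atTop_iff_nat 1).2 hlim
  rwa [huniq _ (hs.mem_of_tendsto hlim (Eventually.of_forall hmem)) hfix] at hlim

theorem tendsto_of_mapsTo_of_map_le (hf : Continuous f) (hs : IsClosed s) (hbdd : BddBelow s)
    (hmaps : MapsTo f s s) (hle : ∀ w ∈ s, f w ≤ w) (huniq : ∀ w ∈ s, f w = w → w = c)
    (hx : ∀ k, x (k + 1) = f (x k)) (hx0 : x 0 ∈ s) : Tendsto x atTop (𝓝 c) :=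
  tendsto_of_mapsTo_of_le_map (α := αᵒᵈ) hf hs hbdd hmaps hle huniq hx hx0

end OrbitConvergence

/-- Up to the factor `λ (ε + t)`, the derivative of `q_{λ,z}` at `t > 0`. -/
def critPoly (lam ε z t : ℝ) : ℝ := (t - z) * (ε + t) + lam

section Roots

variable {lam ε z w : ℝ}

theorem critPoly_eq_sq_sub (t : ℝ) :
    critPoly lam ε z t = (t - (z - ε) / 2) ^ 2 - ((z + ε) ^ 2 / 4 - lam) := by
  unfold critPoly; ring

theorem critPoly_pos (hlam : 0 ≤ lam) (hzε : 0 ≤ z + ε) (hz : z < 2 * √lam - ε) (t : ℝ) :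
    0 < critPoly lam ε z t := by
  have hdisc : (z + ε) ^ 2 < 4 * lam := by nlinarith [sq_sqrt hlam]
  rw [critPoly_eq_sq_sub]
  nlinarith [sq_nonneg (t - (z - ε) / 2)]

theorem lam_le_of_two_sqrt_sub_le (hlam : 0 ≤ lam) (hz : 2 * √lam - ε ≤ z) :
    lam ≤ (z + ε) ^ 2 / 4 := by
  nlinarith [sq_sqrt hlam, sqrt_nonneg lam]

theorem critPoly_eq_mul (hdisc : lam ≤ (z + ε) ^ 2 / 4) (t : ℝ) :
    critPoly lam ε z t = (t - r1 lam ε z) * (t - r2 lam ε z) := by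
  rw [critPoly_eq_sq_sub, r1, r2]
  linear_combination sq_sqrt (sub_nonneg.2 hdisc)

theorem r1_le_r2 : r1 lam ε z ≤ r2 lam ε z := by
  unfold r1 r2; linarith [sqrt_nonneg ((z + ε) ^ 2 / 4 - lam)]

theorem sqrt_sub_le_r2 (hz : 2 * √lam - ε ≤ z) : √lam - ε ≤ r2 lam ε z := by
  unfold r2; linarith [sqrt_nonneg ((z + ε) ^ 2 / 4 - lam)]

theorem r1_le_sqrt_sub (hlam : 0 ≤ lam) (hz : 2 * √lam - ε ≤ z) : r1 lam ε z ≤ √lam - ε := by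
  have hsq : ((z + ε) / 2 - √lam) ^ 2 ≤ (z + ε) ^ 2 / 4 - lam := by
    nlinarith [sq_sqrt hlam, sqrt_nonneg lam]
  have := (le_sqrt (by linarith) (by linarith [lam_le_of_two_sqrt_sub_le hlam hz])).2 hsq
  unfold r1; linarith

theorem eq_r2_of_critPoly_eq_zero (hw : (z - ε) / 2 ≤ w) (h0 : critPoly lam ε z w = 0) :
    w = r2 lam ε z := by
  rw [critPoly_eq_sq_sub, sub_eq_zero] at h0
  rw [r2, ← h0, sqrt_sq (sub_nonneg.2 hw)]
  ring

theorem critPoly_r2 (hdisc : lam ≤ (z + ε) ^ 2 / 4) : critPoly lam ε z (r2 lam ε z) = 0 := by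
  rw [critPoly_eq_mul hdisc, sub_self, mul_zero]

theorem r2_monotoneOn : MonotoneOn (r2 lam ε) (Ici (-ε)) := by
  intro a ha b hb hab
  simp only [mem_Ici] at ha hb
  unfold r2
  gcongr
  nlinarith

end Roots

section Objective

variable {lam ε z w y a b : ℝ}

theorem continuous_qfun (hε : 0 < ε) : Continuous (qfun lam ε z) := by
  unfold qfun logpen
  exact (by fun_prop : Continuous fun x => 1 / (2 * lam) * (x - z) ^ 2).add
    ((by fun_prop : Continuous fun x => 1 + |x| / ε).log fun x => by positivity)

theorem hasDerivAt_qfun (hε : 0 < ε) (hlam : lam ≠ 0) (hw : 0 < w) :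
    HasDerivAt (qfun lam ε z) (critPoly lam ε z w / (lam * (ε + w))) w := by
  have hεw : 0 < ε + w := by linarith
  have hlog : HasDerivAt (fun x => Real.log (1 + x / ε)) (1 / (ε + w)) w := by
    have h := (((hasDerivAt_id' w).div_const ε).const_add 1).log (by positivity)
    rwa [show 1 / ε / (1 + w / ε) = 1 / (ε + w) by field_simp] at h
  have hq : qfun lam ε z =ᶠ[𝓝 w] fun x => 1 / (2 * lam) * (x - z) ^ 2 + Real.log (1 + x / ε) := by
    filter_upwards [lt_mem_nhds hw] with x hx
    rw [qfun, logpen, abs_of_pos hx]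
  refine HasDerivAt.congr_of_eventuallyEq ?_ hq
  have hsq : HasDerivAt (fun x => (x - z) ^ 2) (2 * (w - z)) w := by
    simpa using ((hasDerivAt_id w).sub_const z).fun_pow 2
  convert (hsq.const_mul (1 / (2 * lam))).fun_add hlog using 1
  unfold critPoly
  field_simp

theorem qfun_strictMonoOn (hε : 0 < ε) (hlam : 0 < lam) (ha : 0 ≤ a)
    (hp : ∀ t ∈ Ioo a b, 0 < critPoly lam ε z t) : StrictMonoOn (qfun lam ε z) (Icc a b) := by
  refine strictMonoOn_of_deriv_pos (convex_Icc a b) (continuous_qfun hε).continuousOn ?_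
  rw [interior_Icc]
  intro t ht
  have ht0 : 0 < t := ha.trans_lt ht.1
  rw [(hasDerivAt_qfun hε hlam.ne' ht0).deriv]
  exact div_pos (hp t ht) (by positivity)

theorem qfun_strictAntiOn (hε : 0 < ε) (hlam : 0 < lam) (ha : 0 ≤ a)
    (hp : ∀ t ∈ Ioo a b, critPoly lam ε z t < 0) : StrictAntiOn (qfun lam ε z) (Icc a b) := by
  refine strictAntiOn_of_deriv_neg (convex_Icc a b) (continuous_qfun hε).continuousOn ?_
  rw [interior_Icc]
  intro t ht
  have ht0 : 0 < t := ha.trans_lt ht.1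
  rw [(hasDerivAt_qfun hε hlam.ne' ht0).deriv]
  exact div_neg_of_neg_of_pos (hp t ht) (by positivity)

theorem qfun_abs_le (hlam : 0 ≤ lam) (hz : 0 ≤ z) : qfun lam ε z |y| ≤ qfun lam ε z y := by
  have : (|y| - z) ^ 2 ≤ (y - z) ^ 2 := by
    cases abs_cases y <;> nlinarith
  simp only [qfun, logpen, abs_abs]
  gcongr

theorem qfun_abs_lt (hlam : 0 < lam) (hz : 0 < z) (hy : y < 0) :
    qfun lam ε z |y| < qfun lam ε z y := by
  have : (|y| - z) ^ 2 < (y - z) ^ 2 := by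
    rw [abs_of_neg hy]; nlinarith
  simp only [qfun, logpen, abs_abs]
  gcongr

/-- On `(0, ∞)`, `q_{λ,z}` increases up to `r₁`, decreases on `[r₁, r₂]` and increases again. -/
theorem qfun_zero_lt_or_qfun_r2_le (hε : 0 < ε) (hlam : 0 < lam) (hε' : ε ≤ √lam)
    (hz : 2 * √lam - ε ≤ z) (hy : 0 < y) :
    qfun lam ε z 0 < qfun lam ε z y ∨ qfun lam ε z (r2 lam ε z) ≤ qfun lam ε z y := by
  have hp := critPoly_eq_mul (lam_le_of_two_sqrt_sub_le hlam.le hz)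
  have hr12 : r1 lam ε z ≤ r2 lam ε z := r1_le_r2
  have hr2 : 0 ≤ r2 lam ε z := by linarith [sqrt_sub_le_r2 hz]
  rcases lt_or_ge y (r1 lam ε z) with hy1 | hy1
  · left
    refine qfun_strictMonoOn hε hlam le_rfl (fun t ht => ?_) (left_mem_Icc.2 hy.le)
      (right_mem_Icc.2 hy.le) hy
    rw [hp]
    exact mul_pos_of_neg_of_neg (by linarith [ht.2]) (by linarith [ht.2])
  right
  rcases lt_or_ge y (r2 lam ε z) with hy2 | hy2
  · refine (qfun_strictAntiOn hε hlam hy.le (fun t ht => ?_) (left_mem_Icc.2 hy2.le)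
      (right_mem_Icc.2 hy2.le) hy2).le
    rw [hp]
    exact mul_neg_of_pos_of_neg (by linarith [ht.1]) (by linarith [ht.2])
  · refine (qfun_strictMonoOn hε hlam hr2 (fun t ht => ?_)).monotoneOn
      (left_mem_Icc.2 hy2) (right_mem_Icc.2 hy2) hy2
    rw [hp]
    exact mul_pos (by linarith [ht.1]) (by linarith [ht.1])

theorem qfun_sub_qfun_zero_strictAnti (hlam : 0 < lam) (hw : 0 < w) :
    StrictAnti fun z => qfun lam ε z w - qfun lam ε z 0 := by
  intro z₁ z₂ hz
  simp only [qfun]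
  have : 1 / (2 * lam) * (w * (z₁ - z₂)) < 0 :=
    mul_neg_of_pos_of_neg (by positivity) (mul_neg_of_pos_of_neg hw (by linarith))
  linarith

theorem rfun_strictAntiOn (hε : 0 < ε) (hlam : 0 < lam) (hε' : ε < √lam) :
    StrictAntiOn (rfun lam ε) (Ici (2 * √lam - ε)) := by
  intro z₁ hz₁ z₂ hz₂ hz
  simp only [mem_Ici] at hz₁ hz₂
  set w := r2 lam ε z₁
  have hw : 0 < w := by linarith [sqrt_sub_le_r2 hz₁]
  have hww : w ≤ r2 lam ε z₂ :=
    r2_monotoneOn (mem_Ici.2 (by linarith)) (mem_Ici.2 (by linarith)) hz.le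
  have hmin : qfun lam ε z₂ (r2 lam ε z₂) ≤ qfun lam ε z₂ w := by
    have hp := critPoly_eq_mul (lam_le_of_two_sqrt_sub_le hlam.le hz₂)
    have hr1 := r1_le_sqrt_sub hlam.le hz₂
    refine (qfun_strictAntiOn hε hlam hw.le (fun t ht => ?_)).antitoneOn
      (left_mem_Icc.2 hww) (right_mem_Icc.2 hww) hww
    rw [hp]
    exact mul_neg_of_pos_of_neg (by linarith [ht.1, sqrt_sub_le_r2 hz₁]) (by linarith [ht.2])
  have := qfun_sub_qfun_zero_strictAnti (ε := ε) hlam hw hz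
  simp only [rfun]
  linarith

end Objective

section Prox

variable {lam ε z : ℝ}

theorem zero_mem_prox_of_lt (hε : 0 < ε) (hlam : 0 < lam) (hz0 : 0 ≤ z)
    (hz : z < 2 * √lam - ε) : 0 ∈ prox lam ε z := by
  intro y
  have hmono := qfun_strictMonoOn (z := z) (b := |y|) hε hlam le_rfl
    fun t _ => critPoly_pos hlam.le (by linarith) hz t
  calc qfun lam ε z 0 ≤ qfun lam ε z |y| :=
        hmono.monotoneOn (left_mem_Icc.2 (abs_nonneg y)) (right_mem_Icc.2 (abs_nonneg y))
          (abs_nonneg y)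
    _ ≤ qfun lam ε z y := qfun_abs_le hlam.le hz0

theorem r2_mem_prox_of_rfun_nonpos (hε : 0 < ε) (hlam : 0 < lam) (hε' : ε ≤ √lam)
    (hz : 2 * √lam - ε ≤ z) (hr : rfun lam ε z ≤ 0) : r2 lam ε z ∈ prox lam ε z := by
  have hr : qfun lam ε z (r2 lam ε z) ≤ qfun lam ε z 0 := sub_nonpos.1 hr
  intro y
  refine le_trans ?_ (qfun_abs_le hlam.le (by linarith [sqrt_nonneg lam]))
  rcases (abs_nonneg y).eq_or_lt with hy | hy
  · rwa [← hy]
  · rcases qfun_zero_lt_or_qfun_r2_le hε hlam hε' hz hy with h | h <;> linarith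

theorem prox_eq_zero_of_rfun_pos (hε : 0 < ε) (hlam : 0 < lam) (hε' : ε ≤ √lam)
    (hz : 2 * √lam - ε ≤ z) (hr : 0 < rfun lam ε z) : prox lam ε z = {0} := by
  have hr : qfun lam ε z 0 < qfun lam ε z (r2 lam ε z) := sub_pos.1 hr
  have hz0 : 0 < z := by linarith [sqrt_nonneg lam]
  have hzero_lt : ∀ y, 0 < y → qfun lam ε z 0 < qfun lam ε z y :=
    fun y hy => (qfun_zero_lt_or_qfun_r2_le hε hlam hε' hz hy).elim id hr.trans_le
  refine eq_singleton_iff_unique_mem.2 ⟨fun y => ?_, fun y hy => ?_⟩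
  · refine le_trans ?_ (qfun_abs_le hlam.le hz0.le)
    rcases (abs_nonneg y).eq_or_lt with hy | hy
    · rw [← hy]
    · exact (hzero_lt _ hy).le
  · rcases lt_trichotomy y 0 with hneg | h0 | hpos
    · exact absurd (hy |y|) (qfun_abs_lt hlam hz0 hneg).not_ge
    · exact h0
    · exact absurd (hy 0) (hzero_lt _ hpos).not_ge

theorem r2_notMem_prox_of_rfun_pos (hr : 0 < rfun lam ε z) : r2 lam ε z ∉ prox lam ε z :=
  fun hmem => (hmem 0).not_gt (sub_pos.1 hr)

end Prox

noncomputable def rwStep (lam ε z w : ℝ) : ℝ := max 0 (z - lam / (ε + |w|))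

section Iteration

variable {lam ε z w : ℝ} {x : ℕ → ℝ}

theorem IterRW.succ_eq_rwStep (hε : 0 ≤ ε) (hlam : 0 ≤ lam) (hz : 0 ≤ z) (hx : IterRW lam ε z x)
    (k : ℕ) : x (k + 1) = rwStep lam ε z (x k) := by
  have hd : 0 ≤ lam / (ε + |x k|) := by positivity
  rw [hx k, rwStep, abs_of_nonneg hz]
  split_ifs with hc
  · exact (max_eq_left (by linarith)).symm
  · rw [sign_of_pos (by linarith), one_mul, max_eq_right (by linarith)]

theorem continuous_rwStep (hε : 0 < ε) : Continuous (rwStep lam ε z) :=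
  continuous_const.max <| continuous_const.sub <|
    continuous_const.div (continuous_const.add continuous_abs) fun w => by positivity

theorem sub_div_sub_eq_neg_critPoly_div (hw : ε + w ≠ 0) :
    z - lam / (ε + w) - w = -critPoly lam ε z w / (ε + w) := by
  unfold critPoly
  field_simp
  ring

theorem rwStep_monotoneOn (hε : 0 < ε) (hlam : 0 ≤ lam) :
    MonotoneOn (rwStep lam ε z) (Ici 0) := by
  intro v hv w hw hvw
  simp only [mem_Ici] at hv hw
  simp only [rwStep, abs_of_nonneg hv, abs_of_nonneg hw]
  gcongr

theorem IterRW.tendsto_zero (hε : 0 < ε) (hlam : 0 ≤ lam) (hz0 : 0 ≤ z)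
    (hz : z < 2 * √lam - ε) (hx : IterRW lam ε z x) (hx0 : 0 ≤ x 0) :
    Tendsto x atTop (𝓝 0) := by
  have hlt : ∀ w, 0 ≤ w → z - lam / (ε + w) < w := fun w hw => by
    have hεw : 0 < ε + w := by linarith
    rw [← sub_neg, sub_div_sub_eq_neg_critPoly_div hεw.ne']
    exact div_neg_of_neg_of_pos (neg_neg_of_pos (critPoly_pos hlam (by linarith) hz w)) hεw
  have hstep : ∀ w, 0 ≤ w → rwStep lam ε z w = max 0 (z - lam / (ε + w)) := fun w hw => by
    rw [rwStep, abs_of_nonneg hw]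
  refine tendsto_of_mapsTo_of_map_le (continuous_rwStep hε) isClosed_Ici ⟨0, fun _ h => h⟩
    (fun w _ => mem_Ici.2 (le_max_left _ _)) (fun w hw => ?_) (fun w hw hfix => ?_)
    (hx.succ_eq_rwStep hε.le hlam hz0) hx0
  · rw [hstep w hw]
    exact max_le hw (hlt w hw).le
  · rcases (mem_Ici.1 hw).eq_or_lt with h0 | hpos
    · exact h0.symm
    · rw [hstep w hw] at hfix
      exact absurd hfix (max_lt hpos (hlt w hw)).ne

theorem div_le_sqrt_of_sqrt_le {a d : ℝ} (ha : 0 < a) (hd : √a ≤ d) : a / d ≤ √a := by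
  rw [div_le_iff₀ ((sqrt_pos.2 ha).trans_le hd)]
  nlinarith [mul_self_sqrt ha.le, sqrt_nonneg a]

theorem rwStep_eq_sub_div (hlam : 0 < lam) (hε' : ε ≤ √lam) (hz : 2 * √lam - ε ≤ z)
    (hw : √lam - ε ≤ w) : rwStep lam ε z w = z - lam / (ε + w) := by
  have := div_le_sqrt_of_sqrt_le hlam (by linarith : √lam ≤ ε + w)
  rw [rwStep, abs_of_nonneg (by linarith), max_eq_right (by linarith)]

theorem sqrt_sub_le_rwStep (hlam : 0 < lam) (hε' : ε ≤ √lam) (hz : 2 * √lam - ε ≤ z)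
    (hw : √lam - ε ≤ w) : √lam - ε ≤ rwStep lam ε z w := by
  have := div_le_sqrt_of_sqrt_le hlam (by linarith : √lam ≤ ε + w)
  rw [rwStep_eq_sub_div hlam hε' hz hw]
  linarith

theorem rwStep_sub_self (hlam : 0 < lam) (hε' : ε ≤ √lam) (hz : 2 * √lam - ε ≤ z)
    (hw : √lam - ε ≤ w) : rwStep lam ε z w - w = -critPoly lam ε z w / (ε + w) := by
  have : 0 < ε + w := by linarith [sqrt_pos.2 hlam]
  rw [rwStep_eq_sub_div hlam hε' hz hw, sub_div_sub_eq_neg_critPoly_div this.ne']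

theorem eq_r2_of_rwStep_eq (hlam : 0 < lam) (hε' : ε ≤ √lam) (hz : 2 * √lam - ε ≤ z)
    (hw : √lam - ε ≤ w) (hfix : rwStep lam ε z w = w) : w = r2 lam ε z := by
  -- `λ / (ε + w) ≤ √λ ≤ ε + w` puts the fixed point right of the vertex `(z - ε) / 2`
  have hd := div_le_sqrt_of_sqrt_le hlam (by linarith : √lam ≤ ε + w)
  have hεw : ε + w ≠ 0 := by linarith [sqrt_pos.2 hlam]
  have h0 := rwStep_sub_self hlam hε' hz hw
  rw [hfix, sub_self, eq_comm, div_eq_zero_iff, neg_eq_zero] at h0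
  rw [rwStep_eq_sub_div hlam hε' hz hw] at hfix
  exact eq_r2_of_critPoly_eq_zero (by linarith) (h0.resolve_right hεw)

theorem rwStep_r2 (hlam : 0 < lam) (hε' : ε ≤ √lam) (hz : 2 * √lam - ε ≤ z) :
    rwStep lam ε z (r2 lam ε z) = r2 lam ε z := by
  rw [← sub_eq_zero, rwStep_sub_self hlam hε' hz (sqrt_sub_le_r2 hz),
    critPoly_r2 (lam_le_of_two_sqrt_sub_le hlam.le hz), neg_zero, zero_div]

theorem le_rwStep (hlam : 0 < lam) (hε' : ε ≤ √lam) (hz : 2 * √lam - ε ≤ z)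
    (hw : √lam - ε ≤ w) (hw' : w ≤ r2 lam ε z) : w ≤ rwStep lam ε z w := by
  have hp : critPoly lam ε z w ≤ 0 := by
    rw [critPoly_eq_mul (lam_le_of_two_sqrt_sub_le hlam.le hz)]
    exact mul_nonpos_of_nonneg_of_nonpos (by linarith [r1_le_sqrt_sub hlam.le hz]) (by linarith)
  have := rwStep_sub_self hlam hε' hz hw
  have := div_nonneg (neg_nonneg.2 hp) (by linarith [sqrt_pos.2 hlam] : 0 ≤ ε + w)
  linarith

theorem rwStep_le (hlam : 0 < lam) (hε' : ε ≤ √lam) (hz : 2 * √lam - ε ≤ z)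
    (hw : r2 lam ε z ≤ w) : rwStep lam ε z w ≤ w := by
  have hw' : √lam - ε ≤ w := (sqrt_sub_le_r2 hz).trans hw
  have hp : 0 ≤ critPoly lam ε z w := by
    rw [critPoly_eq_mul (lam_le_of_two_sqrt_sub_le hlam.le hz)]
    exact mul_nonneg (by linarith [r1_le_r2 (lam := lam) (ε := ε) (z := z)]) (by linarith)
  have := rwStep_sub_self hlam hε' hz hw'
  have := div_nonpos_of_nonpos_of_nonneg (neg_nonpos.2 hp)
    (by linarith [sqrt_pos.2 hlam] : 0 ≤ ε + w)
  linarith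

theorem IterRW.tendsto_r2 (hε : 0 < ε) (hlam : 0 < lam) (hε' : ε ≤ √lam)
    (hz : 2 * √lam - ε ≤ z) (hx : IterRW lam ε z x) (hx0 : √lam - ε ≤ x 0) :
    Tendsto x atTop (𝓝 (r2 lam ε z)) := by
  have hr2 := sqrt_sub_le_r2 hz
  have hnonneg : ∀ w, √lam - ε ≤ w → w ∈ Ici 0 := fun w hw => mem_Ici.2 (by linarith)
  have hmono : ∀ v w, √lam - ε ≤ v → v ≤ w → rwStep lam ε z v ≤ rwStep lam ε z w :=
    fun v w hv hvw => rwStep_monotoneOn hε hlam.le (hnonneg v hv) (hnonneg w (hv.trans hvw)) hvw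
  have hfix := rwStep_r2 hlam hε' hz
  have hsucc := hx.succ_eq_rwStep hε.le hlam.le (by linarith [sqrt_nonneg lam])
  rcases le_total (x 0) (r2 lam ε z) with hle | hge
  · exact tendsto_of_mapsTo_of_le_map (continuous_rwStep hε) isClosed_Icc bddAbove_Icc
      (fun w hw => ⟨sqrt_sub_le_rwStep hlam hε' hz hw.1, hfix ▸ hmono _ _ hw.1 hw.2⟩)
      (fun w hw => le_rwStep hlam hε' hz hw.1 hw.2)
      (fun w hw => eq_r2_of_rwStep_eq hlam hε' hz hw.1) hsucc ⟨hx0, hle⟩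
  · exact tendsto_of_mapsTo_of_map_le (continuous_rwStep hε) isClosed_Ici bddBelow_Ici
      (fun w hw => hfix ▸ hmono _ _ hr2 hw) (fun w hw => rwStep_le hlam hε' hz hw)
      (fun w hw => eq_r2_of_rwStep_eq hlam hε' hz (hr2.trans hw)) hsucc hge

end Iteration

/-- for `√λ > ε` and `x⁽⁰⁾ ≥ √λ − ε`, the reweighted ℓ₁ iteration
is accurate off `[2√λ − ε, z*)` and fails on `[2√λ − ε, z*)`, where it converges
to `r₂(z)` even though `prox_{λg}(z) = {0}`. -/
theorem iterRW_accuracy_sqrt_gt (ε lam zs : ℝ) (hε : 0 < ε) (hlam : 0 < lam)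
    (h : ε < Real.sqrt lam)
    (hzs : zs ∈ Set.Ioo (2 * Real.sqrt lam - ε) (lam / ε))
    (hroot : rfun lam ε zs = 0)
    (x0 : ℝ) (hx0 : Real.sqrt lam - ε ≤ x0) :
    ∀ z : ℝ, 0 ≤ z → ∀ x : ℕ → ℝ, x 0 = x0 → IterRW lam ε z x →
      ((z < 2 * Real.sqrt lam - ε ∨ zs < z →
        ∃ L : ℝ, Filter.Tendsto x Filter.atTop (nhds L) ∧ L ∈ prox lam ε z) ∧
      (2 * Real.sqrt lam - ε ≤ z → z < zs →
        Filter.Tendsto x Filter.atTop (nhds (r2 lam ε z)) ∧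
        prox lam ε z = {0} ∧ r2 lam ε z ∉ prox lam ε z)) := by
  intro z hz0 x hx0' hx
  rw [← hx0'] at hx0
  have hzs_mem : zs ∈ Ici (2 * √lam - ε) := mem_Ici.2 hzs.1.le
  refine ⟨fun hz => ?_, fun hz hzzs => ?_⟩
  · rcases hz with hz | hz
    · exact ⟨0, hx.tendsto_zero hε hlam.le hz0 hz (by linarith),
        zero_mem_prox_of_lt hε hlam hz0 hz⟩
    · have hz' : 2 * √lam - ε ≤ z := hzs.1.le.trans hz.le
      have hr := rfun_strictAntiOn hε hlam h hzs_mem hz' hz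
      exact ⟨r2 lam ε z, hx.tendsto_r2 hε hlam h.le hz' hx0,
        r2_mem_prox_of_rfun_nonpos hε hlam h.le hz' (hroot ▸ hr.le)⟩
  · have hr : 0 < rfun lam ε z := hroot ▸ rfun_strictAntiOn hε hlam h hz hzs_mem hzzs
    exact ⟨hx.tendsto_r2 hε hlam h.le hz hx0, prox_eq_zero_of_rfun_pos hε hlam h.le hz hr,
      r2_notMem_prox_of_rfun_pos hr⟩
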